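/- The function QW ↦ F₁^t(QW, Q̃W̃) = D(W‖P|Q) + D^t(QW, Q̃W̃), as a function of the joint distribution QW on X×Y, is convex on the set S = { QW : Σ_x Q(x)f(x) ≤ α, F₁^t(QW, Q̃W̃) < +∞ }, and S is a convex set. -/

import Mathlib

/-!
Each of the five divergences making up `F₁` is a relative entropy `D(c‖d)` of two nonnegative
vectors that depend affinely on `QW`: a conditional divergence is the divergence of the joint
laws, `D(W‖W'|Q) = D(QW‖QW')`. Relative entropy is jointly convex by the two-term log-sum
inequality (the perspective of `u log u` is convex), and nonnegative combinations of such
extended-real convex functions stay convex. Hence `F₁` is convex, so finiteness of `F₁` is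
preserved under mixing, and so is the linear constraint `E_Q[f] ≤ α`.
-/

open scoped BigOperators
open Filter Topology

/-- A joint probability distribution on `X × Y`, given by a nonnegative
pmf `p` summing to one. -/
structure JointDist (X Y : Type) [Fintype X] [Fintype Y] where
  p : X → Y → ℝ
  nonneg : ∀ x y, 0 ≤ p x y
  sum_one : ∑ x : X, ∑ y : Y, p x y = 1

namespace JointDist

variable {X Y : Type} [Fintype X] [Fintype Y]

/-- `X`-marginal `Q`. -/
noncomputable def Qm (μ : JointDist X Y) (x : X) : ℝ := ∑ y : Y, μ.p x y

/-- `Y`-marginal `T`. -/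
noncomputable def Tm (μ : JointDist X Y) (y : Y) : ℝ := ∑ x : X, μ.p x y

/-- Conditional distribution `W(y|x)`. -/
noncomputable def Wc (μ : JointDist X Y) (x : X) (y : Y) : ℝ :=
  if μ.Qm x = 0 then 0 else μ.p x y / μ.Qm x

/-- Conditional distribution `V(x|y)`. -/
noncomputable def Vc (μ : JointDist X Y) (y : Y) (x : X) : ℝ :=
  if μ.Tm y = 0 then 0 else μ.p x y / μ.Tm y

end JointDist

/-- Kullback–Leibler divergence `D(p‖q)` between finite nonnegative vectors,
valued in `EReal`, with the conventions `0 log 0 = 0` and `D = ⊤` if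
absolute continuity fails. -/
noncomputable def relEnt {Z : Type} [Fintype Z] (p q : Z → ℝ) : EReal :=
  if ∀ z, q z = 0 → p z = 0 then
    (((∑ z : Z, if p z = 0 then 0 else p z * Real.log (p z / q z)) : ℝ) : EReal)
  else ⊤

/-- Conditional KL divergence `D(w‖w'|q) = ∑_a q(a) D(w(·|a)‖w'(·|a))`,
valued in `EReal` with the usual conventions. -/
noncomputable def condRelEnt {A B : Type} [Fintype A] [Fintype B]
    (q : A → ℝ) (w w' : A → B → ℝ) : EReal :=
  if ∀ a b, q a ≠ 0 → w' a b = 0 → w a b = 0 then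
    (((∑ a : A, ∑ b : B, if q a * w a b = 0 then 0
        else q a * w a b * Real.log (w a b / w' a b)) : ℝ) : EReal)
  else ⊤

variable {X Y : Type}

/-- The weighted divergence combination
`D^t(QW, Q'W') = t₁ D(Q‖Q') + t₂ D(W‖W'|Q) + t₃ D(T‖T') + t₄ D(V‖V'|T)`. -/
noncomputable def Dt [Fintype X] [Fintype Y] (t : Fin 4 → ℝ)
    (μ ν : JointDist X Y) : EReal :=
  (t 0 : EReal) * relEnt μ.Qm ν.Qm + (t 1 : EReal) * condRelEnt μ.Qm μ.Wc ν.Wc +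
  (t 2 : EReal) * relEnt μ.Tm ν.Tm + (t 3 : EReal) * condRelEnt μ.Tm μ.Vc ν.Vc

/-- `D(W‖P|Q)` for the channel `P`. -/
noncomputable def condDivP [Fintype X] [Fintype Y] (P : X → Y → ℝ)
    (μ : JointDist X Y) : EReal :=
  condRelEnt μ.Qm μ.Wc P

/-- Mutual information `I(Q,W)` of the joint law `QW`. -/
noncomputable def mutInfo [Fintype X] [Fintype Y] (μ : JointDist X Y) : ℝ :=
  ∑ x : X, ∑ y : Y, if μ.p x y = 0 then 0
    else μ.p x y * Real.log (μ.p x y / (μ.Qm x * μ.Tm y))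

/-- Expected cost `E_Q[f(X)]`. -/
noncomputable def expCost [Fintype X] [Fintype Y] (f : X → ℝ)
    (μ : JointDist X Y) : ℝ :=
  ∑ x : X, μ.Qm x * f x

/-- `F₁^t(QW, Q̃W̃) = D(W‖P|Q) + D^t(QW, Q̃W̃)`. -/
noncomputable def F1 [Fintype X] [Fintype Y] (P : X → Y → ℝ) (t : Fin 4 → ℝ)
    (μ ν : JointDist X Y) : EReal :=
  condDivP P μ + Dt t μ ν

/-- `F₂(QW, R) = D(W‖P|Q) − I(Q,W) + R`. -/
noncomputable def F2 [Fintype X] [Fintype Y] (P : X → Y → ℝ) (R : ℝ)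
    (μ : JointDist X Y) : EReal :=
  condDivP P μ - ((mutInfo μ : ℝ) : EReal) + ((R : ℝ) : EReal)

/-- `F^t(QW, Q̃W̃, R) = max{F₁^t(QW, Q̃W̃), F₂(QW, R)}`. -/
noncomputable def Fr [Fintype X] [Fintype Y] (P : X → Y → ℝ) (t : Fin 4 → ℝ)
    (R : ℝ) (μ ν : JointDist X Y) : EReal :=
  max (F1 P t μ ν) (F2 P R μ)

/-- `E_c^t(Q̃W̃, R, α)`: the constrained minimum of `F^t(·, Q̃W̃, R)`. -/
noncomputable def Ec [Fintype X] [Fintype Y] (P : X → Y → ℝ) (t : Fin 4 → ℝ)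
    (f : X → ℝ) (R α : ℝ) (ν : JointDist X Y) : EReal :=
  sInf ((fun μ => Fr P t R μ ν) '' {μ : JointDist X Y | expCost f μ ≤ α})

/-- `F^t(ρ, η, QW, Q̃W̃) = D(W‖P|Q) − ρ I(Q,W) + η E_Q[f] + (1−ρ) D^t(QW, Q̃W̃)`. -/
noncomputable def Fslope [Fintype X] [Fintype Y] (P : X → Y → ℝ) (t : Fin 4 → ℝ)
    (f : X → ℝ) (ρ η : ℝ) (μ ν : JointDist X Y) : EReal :=
  condDivP P μ - ((ρ * mutInfo μ : ℝ) : EReal) + ((η * expCost f μ : ℝ) : EReal)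
    + ((1 - ρ : ℝ) : EReal) * Dt t μ ν

/-- `E₀^t(ρ, η, Q̃W̃)`: the unconstrained minimum of `F^t(ρ, η, ·, Q̃W̃)`. -/
noncomputable def E0 [Fintype X] [Fintype Y] (P : X → Y → ℝ) (t : Fin 4 → ℝ)
    (f : X → ℝ) (ρ η : ℝ) (ν : JointDist X Y) : EReal :=
  sInf (Set.range (fun μ : JointDist X Y => Fslope P t f ρ η μ ν))

theorem EReal.coe_mul_ne_bot {a : ℝ} (ha : 0 ≤ a) {x : EReal} (hx : x ≠ ⊥) :
    (a : EReal) * x ≠ ⊥ :=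
  (EReal.mul_ne_bot _ _).2 ⟨.inl (EReal.coe_ne_bot a), .inr hx, .inl (EReal.coe_ne_top a),
    .inl (EReal.coe_nonneg.2 ha)⟩

theorem EReal.coe_mul_ne_top {a : ℝ} (ha : 0 ≤ a) {x : EReal} (hx : x ≠ ⊤) :
    (a : EReal) * x ≠ ⊤ :=
  (EReal.mul_ne_top _ _).2 ⟨.inl (EReal.coe_ne_bot a), .inl (EReal.coe_nonneg.2 ha),
    .inl (EReal.coe_ne_top a), .inr hx⟩

open Real

theorem mul_log_div_mul_left (c x y : ℝ) :
    c * x * log (c * x / (c * y)) = c * (x * log (x / y)) := by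
  rcases eq_or_ne c 0 with rfl | hc
  · simp
  · rw [mul_div_mul_left _ _ hc, mul_assoc]

theorem add_mul_log_div_add_le {x₁ x₂ y₁ y₂ : ℝ} (hx₁ : 0 ≤ x₁) (hx₂ : 0 ≤ x₂)
    (hy₁ : 0 ≤ y₁) (hy₂ : 0 ≤ y₂) (h₁ : y₁ = 0 → x₁ = 0) (h₂ : y₂ = 0 → x₂ = 0) :
    (x₁ + x₂) * log ((x₁ + x₂) / (y₁ + y₂)) ≤ x₁ * log (x₁ / y₁) + x₂ * log (x₂ / y₂) := by
  rcases hy₁.eq_or_lt with rfl | hy₁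
  · simp [h₁ rfl]
  rcases hy₂.eq_or_lt with rfl | hy₂
  · simp [h₂ rfl]
  have hy : 0 < y₁ + y₂ := by positivity
  have key := convexOn_mul_log.2 (Set.mem_Ici.2 (div_nonneg hx₁ hy₁.le))
    (Set.mem_Ici.2 (div_nonneg hx₂ hy₂.le)) (div_nonneg hy₁.le hy.le)
    (div_nonneg hy₂.le hy.le) (by field_simp)
  have hmix : y₁ / (y₁ + y₂) * (x₁ / y₁) + y₂ / (y₁ + y₂) * (x₂ / y₂)
      = (x₁ + x₂) / (y₁ + y₂) := by field_simp
  simp only [smul_eq_mul, hmix] at key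
  calc (x₁ + x₂) * log ((x₁ + x₂) / (y₁ + y₂))
      = (y₁ + y₂) * ((x₁ + x₂) / (y₁ + y₂) * log ((x₁ + x₂) / (y₁ + y₂))) := by
        field_simp
    _ ≤ (y₁ + y₂) * (y₁ / (y₁ + y₂) * (x₁ / y₁ * log (x₁ / y₁))
          + y₂ / (y₁ + y₂) * (x₂ / y₂ * log (x₂ / y₂))) := by gcongr
    _ = x₁ * log (x₁ / y₁) + x₂ * log (x₂ / y₂) := by field_simp

theorem mul_log_div_convex_comb_le {x₁ x₂ y₁ y₂ a b : ℝ} (hx₁ : 0 ≤ x₁) (hx₂ : 0 ≤ x₂)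
    (hy₁ : 0 ≤ y₁) (hy₂ : 0 ≤ y₂) (h₁ : y₁ = 0 → x₁ = 0) (h₂ : y₂ = 0 → x₂ = 0)
    (ha : 0 ≤ a) (hb : 0 ≤ b) :
    (a * x₁ + b * x₂) * log ((a * x₁ + b * x₂) / (a * y₁ + b * y₂))
      ≤ a * (x₁ * log (x₁ / y₁)) + b * (x₂ * log (x₂ / y₂)) := by
  rw [← mul_log_div_mul_left a, ← mul_log_div_mul_left b]
  refine add_mul_log_div_add_le (by positivity) (by positivity) (by positivity) (by positivity)
    (fun h ↦ ?_) (fun h ↦ ?_)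
  · rcases mul_eq_zero.1 h with h | h <;> simp [h, h₁]
  · rcases mul_eq_zero.1 h with h | h <;> simp [h, h₂]

section RelEnt

variable {Z : Type} [Fintype Z]

theorem relEnt_of_ac {p q : Z → ℝ} (h : ∀ z, q z = 0 → p z = 0) :
    relEnt p q = ((∑ z, p z * log (p z / q z) : ℝ) : EReal) := by
  rw [relEnt, if_pos h]
  congr 1
  refine Finset.sum_congr rfl fun z _ ↦ ?_
  split_ifs with hp <;> simp [hp]

theorem relEnt_of_not_ac {p q : Z → ℝ} (h : ¬ ∀ z, q z = 0 → p z = 0) : relEnt p q = ⊤ :=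
  if_neg h

theorem relEnt_ne_bot (p q : Z → ℝ) : relEnt p q ≠ ⊥ := by
  unfold relEnt
  split_ifs <;> simp

theorem relEnt_convex_comb_le {p₁ p₂ q₁ q₂ : Z → ℝ} (hp₁ : 0 ≤ p₁) (hp₂ : 0 ≤ p₂)
    (hq₁ : 0 ≤ q₁) (hq₂ : 0 ≤ q₂) {a b : ℝ} (ha : 0 ≤ a) (hb : 0 ≤ b) (hab : a + b = 1) :
    relEnt (a • p₁ + b • p₂) (a • q₁ + b • q₂) ≤ a * relEnt p₁ q₁ + b * relEnt p₂ q₂ := by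
  rcases ha.eq_or_lt with rfl | ha
  · obtain rfl : b = 1 := by linarith
    simp
  rcases hb.eq_or_lt with rfl | hb
  · obtain rfl : a = 1 := by linarith
    simp
  by_cases h₁ : ∀ z, q₁ z = 0 → p₁ z = 0
  swap
  · rw [relEnt_of_not_ac h₁, EReal.coe_mul_top_of_pos ha, EReal.top_add_of_ne_bot]
    · exact le_top
    · exact EReal.coe_mul_ne_bot hb.le (relEnt_ne_bot _ _)
  by_cases h₂ : ∀ z, q₂ z = 0 → p₂ z = 0
  swap
  · rw [relEnt_of_not_ac h₂, EReal.coe_mul_top_of_pos hb, EReal.add_top_of_ne_bot]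
    · exact le_top
    · exact EReal.coe_mul_ne_bot ha.le (relEnt_ne_bot _ _)
  have hac : ∀ z, (a • q₁ + b • q₂) z = 0 → (a • p₁ + b • p₂) z = 0 := by
    intro z hz
    simp only [Pi.add_apply, Pi.smul_apply, smul_eq_mul] at hz ⊢
    obtain ⟨hz₁, hz₂⟩ := (add_eq_zero_iff_of_nonneg (mul_nonneg ha.le (hq₁ z))
      (mul_nonneg hb.le (hq₂ z))).1 hz
    rw [h₁ z ((mul_eq_zero.1 hz₁).resolve_left ha.ne'),
      h₂ z ((mul_eq_zero.1 hz₂).resolve_left hb.ne'), mul_zero, mul_zero, add_zero]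
  rw [relEnt_of_ac h₁, relEnt_of_ac h₂, relEnt_of_ac hac, ← EReal.coe_mul, ← EReal.coe_mul,
    ← EReal.coe_add, EReal.coe_le_coe_iff, Finset.mul_sum, Finset.mul_sum,
    ← Finset.sum_add_distrib]
  exact Finset.sum_le_sum fun z _ ↦ mul_log_div_convex_comb_le (hp₁ z) (hp₂ z) (hq₁ z) (hq₂ z)
    (h₁ z) (h₂ z) ha.le hb.le

end RelEnt

theorem condRelEnt_eq_relEnt {A B : Type} [Fintype A] [Fintype B] (q : A → ℝ)
    (w w' : A → B → ℝ) :
    condRelEnt q w w'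
      = relEnt (fun ab : A × B ↦ q ab.1 * w ab.1 ab.2) (fun ab ↦ q ab.1 * w' ab.1 ab.2) := by
  have hac : (∀ a b, q a ≠ 0 → w' a b = 0 → w a b = 0)
      ↔ ∀ ab : A × B, q ab.1 * w' ab.1 ab.2 = 0 → q ab.1 * w ab.1 ab.2 = 0 := by
    simp only [Prod.forall, mul_eq_zero]
    grind
  rw [condRelEnt, relEnt, if_congr hac rfl rfl, Fintype.sum_prod_type]
  congr 2
  refine Finset.sum_congr rfl fun a _ ↦ Finset.sum_congr rfl fun b _ ↦ ?_
  split_ifs with h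
  · rfl
  · rw [mul_div_mul_left _ _ (left_ne_zero_of_mul h)]

namespace JointDist

variable [Fintype X] [Fintype Y]

theorem Qm_nonneg (μ : JointDist X Y) : 0 ≤ μ.Qm := fun x ↦
  Finset.sum_nonneg fun y _ ↦ μ.nonneg x y

theorem Tm_nonneg (μ : JointDist X Y) : 0 ≤ μ.Tm := fun y ↦
  Finset.sum_nonneg fun x _ ↦ μ.nonneg x y

theorem Qm_mul_Wc (μ : JointDist X Y) (x : X) (y : Y) : μ.Qm x * μ.Wc x y = μ.p x y := by
  unfold Wc
  split_ifs with h
  · rw [mul_zero, ((Finset.sum_eq_zero_iff_of_nonneg fun y _ ↦ μ.nonneg x y).1 h y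
      (Finset.mem_univ y))]
  · exact mul_div_cancel₀ _ h

theorem Tm_mul_Vc (μ : JointDist X Y) (y : Y) (x : X) : μ.Tm y * μ.Vc y x = μ.p x y := by
  unfold Vc
  split_ifs with h
  · rw [mul_zero, ((Finset.sum_eq_zero_iff_of_nonneg fun x _ ↦ μ.nonneg x y).1 h x
      (Finset.mem_univ x))]
  · exact mul_div_cancel₀ _ h

theorem Wc_nonneg (μ : JointDist X Y) : 0 ≤ μ.Wc := fun x y ↦ by
  unfold Wc
  split_ifs
  exacts [le_rfl, div_nonneg (μ.nonneg x y) (μ.Qm_nonneg x)]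

theorem Vc_nonneg (μ : JointDist X Y) : 0 ≤ μ.Vc := fun y x ↦ by
  unfold Vc
  split_ifs
  exacts [le_rfl, div_nonneg (μ.nonneg x y) (μ.Tm_nonneg y)]

variable {μ₁ μ₂ κ : JointDist X Y} {a b : ℝ}

theorem Qm_eq_of_p_eq (h : κ.p = a • μ₁.p + b • μ₂.p) : κ.Qm = a • μ₁.Qm + b • μ₂.Qm := by
  ext x
  simp [Qm, h, Finset.sum_add_distrib, Finset.mul_sum]

theorem Tm_eq_of_p_eq (h : κ.p = a • μ₁.p + b • μ₂.p) : κ.Tm = a • μ₁.Tm + b • μ₂.Tm := by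
  ext y
  simp [Tm, h, Finset.sum_add_distrib, Finset.mul_sum]

end JointDist

theorem expCost_eq_of_p_eq [Fintype X] [Fintype Y] (f : X → ℝ) {μ₁ μ₂ κ : JointDist X Y}
    {a b : ℝ} (h : κ.p = a • μ₁.p + b • μ₂.p) :
    expCost f κ = a * expCost f μ₁ + b * expCost f μ₂ := by
  simp [expCost, JointDist.Qm_eq_of_p_eq h, add_mul, Finset.sum_add_distrib, Finset.mul_sum,
    mul_assoc]

section Mixture

variable [Fintype X] [Fintype Y]

/-- Convexity along mixtures, phrased through the pmf since `JointDist X Y` has no module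
structure. -/
def MixtureConvex (g : JointDist X Y → EReal) : Prop :=
  ∀ ⦃μ₁ μ₂ κ : JointDist X Y⦄ ⦃a b : ℝ⦄, 0 ≤ a → 0 ≤ b → a + b = 1 →
    κ.p = a • μ₁.p + b • μ₂.p → g κ ≤ a * g μ₁ + b * g μ₂

def MixtureAffine {Z : Type} (c : JointDist X Y → Z → ℝ) : Prop :=
  ∀ ⦃μ₁ μ₂ κ : JointDist X Y⦄ ⦃a b : ℝ⦄, a + b = 1 →
    κ.p = a • μ₁.p + b • μ₂.p → c κ = a • c μ₁ + b • c μ₂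

namespace MixtureConvex

variable {f g : JointDist X Y → EReal}

theorem add (hf : MixtureConvex f) (hg : MixtureConvex g) :
    MixtureConvex fun μ ↦ f μ + g μ := by
  intro μ₁ μ₂ κ a b ha hb hab h
  calc f κ + g κ ≤ (a * f μ₁ + b * f μ₂) + (a * g μ₁ + b * g μ₂) :=
        add_le_add (hf ha hb hab h) (hg ha hb hab h)
    _ = a * (f μ₁ + g μ₁) + b * (f μ₂ + g μ₂) := by
        rw [EReal.left_distrib_of_nonneg_of_ne_top (EReal.coe_nonneg.2 ha) (EReal.coe_ne_top a),
          EReal.left_distrib_of_nonneg_of_ne_top (EReal.coe_nonneg.2 hb) (EReal.coe_ne_top b),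
          add_add_add_comm]

theorem const_mul (hf : MixtureConvex f) {t : ℝ} (ht : 0 ≤ t) :
    MixtureConvex fun μ ↦ (t : EReal) * f μ := by
  intro μ₁ μ₂ κ a b ha hb hab h
  calc (t : EReal) * f κ ≤ t * (a * f μ₁ + b * f μ₂) :=
        mul_le_mul_of_nonneg_left (hf ha hb hab h) (EReal.coe_nonneg.2 ht)
    _ = a * (t * f μ₁) + b * (t * f μ₂) := by
        rw [EReal.left_distrib_of_nonneg_of_ne_top (EReal.coe_nonneg.2 ht) (EReal.coe_ne_top t),
          mul_left_comm, mul_left_comm (t : EReal)]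

end MixtureConvex

theorem MixtureAffine.const {Z : Type} (q : Z → ℝ) :
    MixtureAffine (X := X) (Y := Y) fun _ ↦ q := by
  intro μ₁ μ₂ κ a b hab _
  rw [← add_smul, hab, one_smul]

theorem mixtureConvex_relEnt {Z : Type} [Fintype Z] {c d : JointDist X Y → Z → ℝ}
    (hc : MixtureAffine c) (hd : MixtureAffine d) (hc₀ : ∀ μ, 0 ≤ c μ) (hd₀ : ∀ μ, 0 ≤ d μ) :
    MixtureConvex fun μ ↦ relEnt (c μ) (d μ) := by
  intro μ₁ μ₂ κ a b ha hb hab h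
  dsimp only
  rw [hc hab h, hd hab h]
  exact relEnt_convex_comb_le (hc₀ μ₁) (hc₀ μ₂) (hd₀ μ₁) (hd₀ μ₂) ha hb hab

theorem mixtureConvex_relEnt_Qm {q : X → ℝ} (hq : 0 ≤ q) :
    MixtureConvex fun μ : JointDist X Y ↦ relEnt μ.Qm q :=
  mixtureConvex_relEnt (fun _ _ _ _ _ _ ↦ JointDist.Qm_eq_of_p_eq) (.const q)
    JointDist.Qm_nonneg fun _ ↦ hq

theorem mixtureConvex_relEnt_Tm {q : Y → ℝ} (hq : 0 ≤ q) :
    MixtureConvex fun μ : JointDist X Y ↦ relEnt μ.Tm q :=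
  mixtureConvex_relEnt (fun _ _ _ _ _ _ ↦ JointDist.Tm_eq_of_p_eq) (.const q)
    JointDist.Tm_nonneg fun _ ↦ hq

theorem mixtureConvex_condRelEnt_Wc {w : X → Y → ℝ} (hw : 0 ≤ w) :
    MixtureConvex fun μ : JointDist X Y ↦ condRelEnt μ.Qm μ.Wc w := by
  simp only [condRelEnt_eq_relEnt, JointDist.Qm_mul_Wc]
  refine mixtureConvex_relEnt (fun μ₁ μ₂ κ a b _ h ↦ ?_) (fun μ₁ μ₂ κ a b _ h ↦ ?_)
    (fun μ xy ↦ μ.nonneg xy.1 xy.2) (fun μ xy ↦ mul_nonneg (μ.Qm_nonneg _) (hw _ _))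
  · ext xy
    simp [h]
  · ext xy
    simp [JointDist.Qm_eq_of_p_eq h, add_mul, mul_assoc]

theorem mixtureConvex_condRelEnt_Vc {v : Y → X → ℝ} (hv : 0 ≤ v) :
    MixtureConvex fun μ : JointDist X Y ↦ condRelEnt μ.Tm μ.Vc v := by
  simp only [condRelEnt_eq_relEnt, JointDist.Tm_mul_Vc]
  refine mixtureConvex_relEnt (fun μ₁ μ₂ κ a b _ h ↦ ?_) (fun μ₁ μ₂ κ a b _ h ↦ ?_)
    (fun μ yx ↦ μ.nonneg yx.2 yx.1) (fun μ yx ↦ mul_nonneg (μ.Tm_nonneg _) (hv _ _))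
  · ext yx
    simp [h]
  · ext yx
    simp [JointDist.Tm_eq_of_p_eq h, add_mul, mul_assoc]

theorem mixtureConvex_F1 {P : X → Y → ℝ} (hP : 0 ≤ P) {t : Fin 4 → ℝ} (ht : ∀ i, 0 ≤ t i)
    (ν : JointDist X Y) : MixtureConvex fun μ ↦ F1 P t μ ν :=
  (mixtureConvex_condRelEnt_Wc hP).add <|
    ((((mixtureConvex_relEnt_Qm ν.Qm_nonneg).const_mul (ht 0)).add
      ((mixtureConvex_condRelEnt_Wc ν.Wc_nonneg).const_mul (ht 1))).add
      ((mixtureConvex_relEnt_Tm ν.Tm_nonneg).const_mul (ht 2))).add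
      ((mixtureConvex_condRelEnt_Vc ν.Vc_nonneg).const_mul (ht 3))

end Mixture

theorem stmt5_general {X Y : Type} [Fintype X] [Fintype Y]
    (P : X → Y → ℝ) (hP : ∀ x y, 0 ≤ P x y)
    (t : Fin 4 → ℝ) (ht : ∀ i, 0 ≤ t i)
    (f : X → ℝ) (α : ℝ) (ν : JointDist X Y)
    (μ₁ μ₂ : JointDist X Y)
    (h₁ : expCost f μ₁ ≤ α ∧ F1 P t μ₁ ν < ⊤)
    (h₂ : expCost f μ₂ ≤ α ∧ F1 P t μ₂ ν < ⊤)
    (l : ℝ) (hl0 : 0 ≤ l) (hl1 : l ≤ 1)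
    (κ : JointDist X Y)
    (hκ : ∀ x y, κ.p x y = l * μ₁.p x y + (1 - l) * μ₂.p x y) :
    (expCost f κ ≤ α ∧ F1 P t κ ν < ⊤) ∧
      F1 P t κ ν ≤ (l : EReal) * F1 P t μ₁ ν
        + ((1 - l : ℝ) : EReal) * F1 P t μ₂ ν := by
  have hl : 0 ≤ 1 - l := sub_nonneg.2 hl1
  have hmix : κ.p = l • μ₁.p + (1 - l) • μ₂.p := by
    ext x y
    simp [hκ]
  have hconv := mixtureConvex_F1 hP ht ν hl0 hl (add_sub_cancel l 1) hmix
  have hcost : expCost f κ ≤ α := by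
    rw [expCost_eq_of_p_eq f hmix]
    exact convex_Iic α h₁.1 h₂.1 hl0 hl (add_sub_cancel l 1)
  exact ⟨⟨hcost, hconv.trans_lt (EReal.add_lt_top (EReal.coe_mul_ne_top hl0 h₁.2.ne)
    (EReal.coe_mul_ne_top hl h₂.2.ne))⟩, hconv⟩

/-- The set `S = { QW : E_Q[f] ≤ α, F₁^t(QW, Q̃W̃) < ⊤ }` is convex and
`QW ↦ F₁^t(QW, Q̃W̃)` is convex on it. -/
theorem stmt5 {X Y : Type} [Fintype X] [Fintype Y]
    (P : X → Y → ℝ) (hP : ∀ x y, 0 ≤ P x y) (hPsum : ∀ x, ∑ y : Y, P x y = 1)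
    (t : Fin 4 → ℝ) (ht : ∀ i, 0 ≤ t i)
    (f : X → ℝ) (α : ℝ) (ν : JointDist X Y)
    (μ₁ μ₂ : JointDist X Y)
    (h₁ : expCost f μ₁ ≤ α ∧ F1 P t μ₁ ν < ⊤)
    (h₂ : expCost f μ₂ ≤ α ∧ F1 P t μ₂ ν < ⊤)
    (l : ℝ) (hl0 : 0 ≤ l) (hl1 : l ≤ 1)
    (κ : JointDist X Y)
    (hκ : ∀ x y, κ.p x y = l * μ₁.p x y + (1 - l) * μ₂.p x y) :
    (expCost f κ ≤ α ∧ F1 P t κ ν < ⊤) ∧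
      F1 P t κ ν ≤ (l : EReal) * F1 P t μ₁ ν
        + ((1 - l : ℝ) : EReal) * F1 P t μ₂ ν :=
  stmt5_general P hP t ht f α ν μ₁ μ₂ h₁ h₂ l hl0 hl1 κ hκ
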